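/- Let d_1, d_2, d_3, d_4 be a basis of (ZMod 3)^4 and set d_i' = -d_i (so each pair {d_i, d_i'} is a 0-line). A tenth pair {d_5, -d_5} extends these eight points to a demicap with anchor 0 if and only if d_5 = c_1 d_1 + c_2 d_2 + c_3 d_3 + c_4 d_4 with each c_i ∈ {1, -1}; consequently, exactly eight pairs {d_5, -d_5} work. -/

import Mathlib

/-! Write `x = Σ yᵢ dᵢ`. Four of the five vectors `d₁, …, d₄, x` lie in a hyperplane exactly
when some coordinate `yᵢ` vanishes: then `x` and the `dⱼ` with `j ≠ i` lie in the coordinate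
hyperplane `yᵢ = 0`, and otherwise exchanging `dᵢ` for `x` in the basis gives a basis again.
When every `yᵢ = ±1`, the coordinate isomorphism of the basis maps the ten points `±dᵢ, ±x` to
`±eᵢ, ±y` with `y ∈ {±1}⁴`, and that these are ten distinct points forming a cap is a finite
check. The sixteen such `x` come in eight pairs `{x, -x}`. -/

abbrev V4 := Fin 4 → ZMod 3

def IsCap (C : Set V4) : Prop :=
  ∀ a ∈ C, ∀ b ∈ C, ∀ c ∈ C, a ≠ b → a ≠ c → b ≠ c → a + b + c ≠ 0

/-- The ten points `{d i, -d i}` of five 0-lines. -/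
def demiSet (d : Fin 5 → V4) : Set V4 :=
  Set.range d ∪ Set.range fun i => -(d i)

/-- The five pairs `{d i, -d i}` form a demicap with anchor 0. -/
def IsDemicap0 (d : Fin 5 → V4) : Prop :=
  (demiSet d).ncard = 10 ∧ IsCap (demiSet d) ∧
  ¬ ∃ s : Finset (Fin 5), s.card = 4 ∧
    ∃ W : Submodule (ZMod 3) V4, Module.finrank (ZMod 3) W = 3 ∧ ∀ i ∈ s, d i ∈ W

open Module Function

theorem Module.Basis.mem_of_repr_ne_zero {ι K V : Type*} [Fintype ι] [DivisionRing K]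
    [AddCommGroup V] [Module K V] (b : Basis ι K V) {W : Submodule K V} {y : V} {i : ι}
    (hy : b.repr y i ≠ 0) (hyW : y ∈ W) (hbW : ∀ j, j ≠ i → b j ∈ W) : b i ∈ W := by
  classical
  have hsum : b.repr y i • b i = y - ∑ j ∈ Finset.univ.erase i, b.repr y j • b j := by
    rw [eq_sub_iff_add_eq, Finset.add_sum_erase _ (fun j => b.repr y j • b j) (Finset.mem_univ i),
      b.sum_repr]
  rw [← W.smul_mem_iff hy, hsum]
  exact W.sub_mem hyW (W.sum_mem fun j hj => W.smul_mem _ (hbW j (Finset.ne_of_mem_erase hj)))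

theorem Module.Basis.ncard_setOf_forall_repr_ne_zero {ι K V : Type*} [Fintype ι] [Field K]
    [Fintype K] [AddCommGroup V] [Module K V] (b : Basis ι K V) :
    {x | ∀ i, b.repr x i ≠ 0}.ncard = (Fintype.card K - 1) ^ Fintype.card ι := by
  classical
  have hpre : {x | ∀ i, b.repr x i ≠ 0} = b.equivFun ⁻¹' {y | ∀ i, y i ≠ 0} := by ext; simp
  rw [hpre, Set.ncard_preimage_of_injective_subset_range b.equivFun.injective
    (by simp [b.equivFun.surjective.range_eq]), ← Nat.card_coe_set_eq]
  refine (Nat.card_congr (Equiv.subtypePiEquivPi (p := fun (_ : ι) (c : K) => c ≠ 0))).trans ?_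
  simp [Nat.card_eq_fintype_card]

theorem ncard_image_pair_neg_mul_two {G : Type*} [AddGroup G] {S : Set G} (hS : S.Finite)
    (hneg : ∀ x ∈ S, -x ∈ S) (hne : ∀ x ∈ S, -x ≠ x) :
    ((fun x => ({x, -x} : Set G)) '' S).ncard * 2 = S.ncard := by
  classical
  lift S to Finset G using hS
  rw [← Finset.coe_image, Set.ncard_coe_finset, Set.ncard_coe_finset,
    Finset.card_eq_sum_card_image (fun x => ({x, -x} : Set G)) S, Finset.sum_const_nat]
  intro P hP
  obtain ⟨x, hxS, rfl⟩ := Finset.mem_image.mp hP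
  have hfiber : S.filter (fun z => ({z, -z} : Set G) = {x, -x}) = {x, -x} := by
    ext z
    simp only [Finset.mem_filter, Set.pair_eq_pair_iff, Finset.mem_insert, Finset.mem_singleton]
    constructor
    · rintro ⟨-, ⟨rfl, -⟩ | ⟨rfl, -⟩⟩ <;> simp
    · rintro (rfl | rfl)
      · simp [hxS]
      · simpa using hneg x hxS
  rw [hfiber, Finset.card_pair (hne x hxS).symm]

def signedPoints (d : Fin 5 → V4) : Fin 5 ⊕ Fin 5 → V4 := Sum.elim d (-d)

theorem demiSet_eq_range (d : Fin 5 → V4) : demiSet d = Set.range (signedPoints d) :=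
  (Set.Sum.elim_range d (-d)).symm

section Transport

variable {F : Type*} [FunLike F V4 V4] [AddMonoidHomClass F V4 V4]

theorem demiSet_comp (f : F) (d : Fin 5 → V4) : demiSet (f ∘ d) = f '' demiSet d := by
  rw [demiSet_eq_range, demiSet_eq_range, ← Set.range_comp]
  congr
  funext z
  cases z <;> simp [signedPoints]

theorem IsCap.of_image {f : F} (hf : Injective f) {C : Set V4} (h : IsCap (f '' C)) :
    IsCap C := by
  intro a ha b hb c hc hab hac hbc habc
  exact h _ (Set.mem_image_of_mem f ha) _ (Set.mem_image_of_mem f hb) _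
    (Set.mem_image_of_mem f hc) (hf.ne hab) (hf.ne hac) (hf.ne hbc)
    (by rw [← map_add, ← map_add, habc, map_zero])

end Transport

theorem isCap_range {ι : Type*} (f : ι → V4)
    (h : ∀ i j k, i ≠ j → i ≠ k → j ≠ k → f i + f j + f k ≠ 0) : IsCap (Set.range f) := by
  rintro - ⟨i, rfl⟩ - ⟨j, rfl⟩ - ⟨k, rfl⟩ hij hik hjk
  exact h i j k (ne_of_apply_ne f hij) (ne_of_apply_ne f hik) (ne_of_apply_ne f hjk)

theorem injective_and_sum_ne_zero_signedPoints_snoc_single : ∀ y : V4, (∀ i, y i ≠ 0) →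
    let p := signedPoints (Fin.snoc (fun i => Pi.single i 1) y)
    Injective p ∧ ∀ i j k, i ≠ j → i ≠ k → j ≠ k → p i + p j + p k ≠ 0 := by
  decide +kernel

theorem ncard_demiSet_and_isCap_snoc_basis (b : Basis (Fin 4) (ZMod 3) V4) {y : V4}
    (hy : ∀ i, b.repr y i ≠ 0) :
    (demiSet (Fin.snoc b y)).ncard = 10 ∧ IsCap (demiSet (Fin.snoc b y)) := by
  have hcoord : b.equivFun ∘ Fin.snoc b y = Fin.snoc (fun i => Pi.single i 1) (b.equivFun y) := by
    rw [Fin.comp_snoc]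
    congr
    funext i j
    simp [Pi.single_apply, eq_comm]
  obtain ⟨hinj, hsum⟩ :=
    injective_and_sum_ne_zero_signedPoints_snoc_single (b.equivFun y) (by simpa using hy)
  have himage : b.equivFun '' demiSet (Fin.snoc b y) =
      Set.range (signedPoints (Fin.snoc (fun i => Pi.single i 1) (b.equivFun y))) := by
    rw [← demiSet_comp, hcoord, demiSet_eq_range]
  constructor
  · rw [← Set.ncard_image_of_injective _ b.equivFun.injective, himage,
      Set.ncard_range_of_injective hinj]
    simp
  · exact IsCap.of_image b.equivFun.injective (himage ▸ isCap_range _ hsum)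

def HasFourInHyperplane (d : Fin 5 → V4) : Prop :=
  ∃ s : Finset (Fin 5), s.card = 4 ∧
    ∃ W : Submodule (ZMod 3) V4, finrank (ZMod 3) W = 3 ∧ ∀ i ∈ s, d i ∈ W

theorem hasFourInHyperplane_snoc_of_repr_eq_zero (b : Basis (Fin 4) (ZMod 3) V4) {y : V4}
    {i : Fin 4} (hy : b.repr y i = 0) : HasFourInHyperplane (Fin.snoc b y) := by
  refine ⟨{i.castSucc}ᶜ, by simp [Finset.card_compl], LinearMap.ker (b.coord i), ?_, ?_⟩
  · have hcoord : b.coord i ≠ 0 := fun h => by simpa using LinearMap.congr_fun h (b i)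
    have := Module.Dual.finrank_ker_add_one_of_ne_zero hcoord
    rw [finrank_fin_fun] at this
    omega
  · intro j hj
    induction j using Fin.lastCases with
    | last => simpa only [LinearMap.mem_ker, Fin.snoc_last, Basis.coord_apply] using hy
    | cast k =>
      have hki : k ≠ i := by simpa using hj
      simp [hki]

theorem not_hasFourInHyperplane_snoc (b : Basis (Fin 4) (ZMod 3) V4) {y : V4}
    (hy : ∀ i, b.repr y i ≠ 0) : ¬ HasFourInHyperplane (Fin.snoc b y) := by
  rintro ⟨s, hs, W, hW, hmem⟩
  obtain ⟨k, hk⟩ := Finset.card_eq_one.mp (show sᶜ.card = 1 by rw [Finset.card_compl, hs]; rfl)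
  have hmem' : ∀ j, j ≠ k → (Fin.snoc b y : Fin 5 → V4) j ∈ W := fun j hj =>
    hmem j (by_contra fun hs => hj (Finset.mem_singleton.mp (hk ▸ Finset.mem_compl.mpr hs)))
  have hbW : ∀ i, b i ∈ W := by
    induction k using Fin.lastCases with
    | last => exact fun i => by simpa using hmem' i.castSucc (Fin.castSucc_ne_last i)
    | cast i₀ =>
      have hbW' : ∀ j, j ≠ i₀ → b j ∈ W := fun j hj => by
        simpa using hmem' j.castSucc (by simpa using hj)
      intro i
      obtain rfl | hi := eq_or_ne i i₀
      · have hyW := hmem' (Fin.last 4) (Fin.castSucc_ne_last i).symm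
        rw [Fin.snoc_last] at hyW
        exact b.mem_of_repr_ne_zero (hy i) hyW hbW'
      · exact hbW' i hi
  have hWtop : W = ⊤ := by
    rw [eq_top_iff, ← b.span_eq, Submodule.span_le]
    exact Set.range_subset_iff.mpr hbW
  rw [hWtop, finrank_top, finrank_fin_fun] at hW
  omega

theorem isDemicap0_snoc_basis_iff (b : Basis (Fin 4) (ZMod 3) V4) (y : V4) :
    IsDemicap0 (Fin.snoc b y) ↔ ∀ i, b.repr y i ≠ 0 := by
  refine ⟨fun h i hi => h.2.2 (hasFourInHyperplane_snoc_of_repr_eq_zero b hi), fun hy => ?_⟩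
  obtain ⟨hcard, hcap⟩ := ncard_demiSet_and_isCap_snoc_basis b hy
  exact ⟨hcard, hcap, not_hasFourInHyperplane_snoc b hy⟩

/-- Given a basis `d₁,…,d₄` (with pairs `{dᵢ, -dᵢ}`), a fifth pair `{x, -x}`
extends them to a demicap with anchor 0 iff `x = Σ cᵢ dᵢ` with each `cᵢ = ±1`;
consequently exactly eight pairs work. -/
theorem extend_basis_to_demicap (bas : Module.Basis (Fin 4) (ZMod 3) V4) :
    (∀ x : V4,
        IsDemicap0 (Fin.snoc (fun i => bas i) x) ↔
          ∃ c : Fin 4 → ZMod 3, (∀ i, c i = 1 ∨ c i = -1) ∧ x = ∑ i, c i • bas i) ∧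
    {P : Set V4 | ∃ x : V4,
        IsDemicap0 (Fin.snoc (fun i => bas i) x) ∧ P = {x, -x}}.ncard = 8 := by
  have hsign : ∀ c : ZMod 3, c ≠ 0 ↔ c = 1 ∨ c = -1 := by decide
  refine ⟨fun x => ?_, ?_⟩
  · rw [isDemicap0_snoc_basis_iff]
    refine ⟨fun h => ⟨bas.repr x, fun i => (hsign _).1 (h i), (bas.sum_repr x).symm⟩, ?_⟩
    rintro ⟨c, hc, rfl⟩ i
    rw [bas.repr_sum_self]
    exact (hsign _).2 (hc i)
  · set S := {x : V4 | ∀ i, bas.repr x i ≠ 0}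
    have hpairs : {P : Set V4 | ∃ x, IsDemicap0 (Fin.snoc (fun i => bas i) x) ∧ P = {x, -x}} =
        (fun x => ({x, -x} : Set V4)) '' S := by
      ext P
      simp [S, isDemicap0_snoc_basis_iff, eq_comm]
    have hS : S.ncard = 16 := by simp [S, bas.ncard_setOf_forall_repr_ne_zero]
    have hneg : ∀ c : ZMod 3, c ≠ 0 → -c ≠ c := by decide
    have hcount := ncard_image_pair_neg_mul_two S.toFinite (fun x hx i => by simpa using hx i)
      (fun x hx h => hneg _ (hx 0) (by simpa using congr_arg (fun v => bas.repr v 0) h))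
    rw [hpairs]
    omega
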